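/- Let A be a continuous dcpo equipped with the Scott topology, and define the relation R on A × A by R = {(x,y) | there exist v, w ∈ A with v ≪ x, w ≪ y, and the pair {v,w} has no upper bound in A}. Then R is open in the product topology and symmetric, and its complement ∼ = (A × A) \ R is the least closed tolerance on A: ∼ is reflexive, symmetric, and closed in the product topology, and every reflexive relation T ⊆ A × A that is closed in the product topology contains ∼. -/

import Mathlib

/-- `x` is way below `y`: for every nonempty directed set `S` possessing a least
upper bound `b` with `y ≤ b`, there is `s ∈ S` with `x ≤ s`. -/
def wayBelow {α : Type*} [Preorder α] (x y : α) : Prop :=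
  ∀ S : Set α, S.Nonempty → DirectedOn (· ≤ ·) S → ∀ b : α, IsLUB S b → y ≤ b → ∃ s ∈ S, x ≤ s

/-- A directed complete partial order: every directed subset (including `∅`,
so there is a least element) has a least upper bound. -/
def IsDcpo (α : Type*) [Preorder α] : Prop :=
  ∀ S : Set α, DirectedOn (· ≤ ·) S → ∃ b, IsLUB S b

/-- Bounded completeness: every subset with an upper bound has a least upper bound. -/
def BoundedComplete (α : Type*) [Preorder α] : Prop :=
  ∀ S : Set α, (∃ b, ∀ s ∈ S, s ≤ b) → ∃ m, IsLUB S m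

/-- Algebraicity: for every element `a`, the set of compact elements below `a` is
(nonempty and) directed with least upper bound `a`. -/
def IsAlgebraicDom (α : Type*) [Preorder α] : Prop :=
  ∀ a : α, ({k : α | wayBelow k k ∧ k ≤ a}).Nonempty ∧
    DirectedOn (· ≤ ·) {k : α | wayBelow k k ∧ k ≤ a} ∧
    IsLUB {k : α | wayBelow k k ∧ k ≤ a} a

/-- `K` is a basis of a continuous dcpo: for every `a`, the set of elements of `K`
way below `a` is (nonempty and) directed with least upper bound `a`. -/
def IsDomBasis {α : Type*} [Preorder α] (K : Set α) : Prop :=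
  ∀ a : α, ({k ∈ K | wayBelow k a}).Nonempty ∧
    DirectedOn (· ≤ ·) {k ∈ K | wayBelow k a} ∧
    IsLUB {k ∈ K | wayBelow k a} a

/-- Scott open sets: upper sets inaccessible by least upper bounds of nonempty
directed sets. -/
def ScottOpen {α : Type*} [Preorder α] (U : Set α) : Prop :=
  (∀ x ∈ U, ∀ y, x ≤ y → y ∈ U) ∧
  ∀ S : Set α, S.Nonempty → DirectedOn (· ≤ ·) S → ∀ b : α, IsLUB S b → b ∈ U → ∃ s ∈ S, s ∈ U

/-- Interior in the Scott topology: the largest Scott open subset. -/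
def scottInt {α : Type*} [Preorder α] (B : Set α) : Set α :=
  ⋃₀ {U : Set α | ScottOpen U ∧ U ⊆ B}

/-- Negative information about `x`: the elements inconsistent with `x`
(the pair has no upper bound). -/
def negSet {α : Type*} [Preorder α] (x : α) : Set α :=
  {y | ¬∃ b, x ≤ b ∧ y ≤ b}

/-- `J_x = {y | x ∈ Int (I_y)}`, the continuous approximation of `I_x = negSet x`. -/
def jSet {α : Type*} [Preorder α] (x : α) : Set α :=
  {y | x ∈ scottInt (negSet y)}

/-- The set of total (maximal) elements. -/
def TotalElems (α : Type*) [Preorder α] : Set α := {x | ∀ y, x ≤ y → y = x}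

/-- Openness in the product of the Scott topologies on `α × α`. -/
def ProdScottOpen {α : Type*} [Preorder α] (W : Set (α × α)) : Prop :=
  ∀ p ∈ W, ∃ U V : Set α, ScottOpen U ∧ ScottOpen V ∧
    p.1 ∈ U ∧ p.2 ∈ V ∧ U ×ˢ V ⊆ W

/-! By interpolation, `{a | v ≪ a}` is Scott open for every `v`, so `R` is a union of open
boxes. Conversely, if a closed reflexive `T` misses `(x, y)`, take an open box `U × V` around it
inside `Tᶜ`; since `U` and `V` are Scott open they contain some `v ≪ x` and `w ≪ y`, and a common
upper bound `b` of `v, w` would put `(b, b) ∈ U × V ⊆ Tᶜ`. -/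

/-- The relation `R` of the theorem. -/
def approxApart (α : Type*) [Preorder α] : Set (α × α) :=
  {p | ∃ v w : α, wayBelow v p.1 ∧ wayBelow w p.2 ∧ ¬∃ b : α, v ≤ b ∧ w ≤ b}

section WayBelow

variable {α : Type*} [Preorder α]

theorem wayBelow.le {x y : α} (h : wayBelow x y) : x ≤ y := by
  obtain ⟨s, rfl, hxs⟩ := h {y} ⟨y, rfl⟩ (directedOn_singleton y) y isLUB_singleton le_rfl
  exact hxs

theorem wayBelow.trans_le {x y z : α} (h : wayBelow x y) (hyz : y ≤ z) : wayBelow x z :=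
  fun S hS hdir b hb hzb => h S hS hdir b hb (hyz.trans hzb)

theorem wayBelow.of_le_left {x y z : α} (hxy : x ≤ y) (h : wayBelow y z) : wayBelow x z :=
  fun S hS hdir b hb hzb => (h S hS hdir b hb hzb).imp fun _ ⟨hs, hys⟩ => ⟨hs, hxy.trans hys⟩

end WayBelow

namespace IsDomBasis

variable {α : Type*} [Preorder α] {K : Set α}

theorem exists_mem_wayBelow_le (hK : IsDomBasis K) {v x : α} (h : wayBelow v x) :
    ∃ k ∈ K, wayBelow k x ∧ v ≤ k := by
  obtain ⟨hne, hdir, hlub⟩ := hK x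
  obtain ⟨k, ⟨hkK, hkx⟩, hvk⟩ := h _ hne hdir x hlub le_rfl
  exact ⟨k, hkK, hkx, hvk⟩

theorem isLUB_wayBelow_wayBelow (hK : IsDomBasis K) (b : α) :
    IsLUB {k ∈ K | ∃ k' ∈ K, wayBelow k k' ∧ wayBelow k' b} b := by
  refine ⟨fun k ⟨_, k', _, hkk', hk'b⟩ => hkk'.le.trans hk'b.le, fun u hu => ?_⟩
  refine (hK b).2.2.2 fun k' ⟨hk'K, hk'b⟩ => (hK k').2.2.2 fun k ⟨hkK, hkk'⟩ => ?_
  exact hu ⟨hkK, k', hk'K, hkk', hk'b⟩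

theorem directedOn_wayBelow_wayBelow (hK : IsDomBasis K) (b : α) :
    DirectedOn (· ≤ ·) {k ∈ K | ∃ k' ∈ K, wayBelow k k' ∧ wayBelow k' b} := by
  rintro x₁ ⟨hx₁K, k₁, hk₁K, hx₁k₁, hk₁b⟩ x₂ ⟨hx₂K, k₂, hk₂K, hx₂k₂, hk₂b⟩
  obtain ⟨k, ⟨hkK, hkb⟩, hk₁k, hk₂k⟩ := (hK b).2.1 k₁ ⟨hk₁K, hk₁b⟩ k₂ ⟨hk₂K, hk₂b⟩
  obtain ⟨m₁, hm₁K, hm₁k, hx₁m₁⟩ := hK.exists_mem_wayBelow_le (hx₁k₁.trans_le hk₁k)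
  obtain ⟨m₂, hm₂K, hm₂k, hx₂m₂⟩ := hK.exists_mem_wayBelow_le (hx₂k₂.trans_le hk₂k)
  obtain ⟨m, ⟨hmK, hmk⟩, hm₁m, hm₂m⟩ := (hK k).2.1 m₁ ⟨hm₁K, hm₁k⟩ m₂ ⟨hm₂K, hm₂k⟩
  exact ⟨m, ⟨hmK, k, hkK, hmk, hkb⟩, hx₁m₁.trans hm₁m, hx₂m₂.trans hm₂m⟩

/-- Interpolation: test `v ≪ b` against the directed set of basis elements two steps way
below `b`, whose supremum is still `b`. -/
theorem exists_wayBelow_wayBelow (hK : IsDomBasis K) {v b : α} (h : wayBelow v b) :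
    ∃ k, wayBelow v k ∧ wayBelow k b := by
  have hne : {k ∈ K | ∃ k' ∈ K, wayBelow k k' ∧ wayBelow k' b}.Nonempty := by
    obtain ⟨k', hk'K, hk'b⟩ := (hK b).1
    obtain ⟨k, hkK, hkk'⟩ := (hK k').1
    exact ⟨k, hkK, k', hk'K, hkk', hk'b⟩
  obtain ⟨_, ⟨_, k, _, hdk, hkb⟩, hvd⟩ :=
    h _ hne (hK.directedOn_wayBelow_wayBelow b) b (hK.isLUB_wayBelow_wayBelow b) le_rfl
  exact ⟨k, hdk.of_le_left hvd, hkb⟩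

theorem scottOpen_setOf_wayBelow (hK : IsDomBasis K) (v : α) :
    ScottOpen {a | wayBelow v a} := by
  refine ⟨fun x hx y hxy => hx.trans_le hxy, fun S hS hdir b hb hvb => ?_⟩
  obtain ⟨k, hvk, hkb⟩ := hK.exists_wayBelow_wayBelow hvb
  obtain ⟨s, hs, hks⟩ := hkb S hS hdir b hb le_rfl
  exact ⟨s, hs, hvk.trans_le hks⟩

theorem exists_wayBelow_mem_of_scottOpen (hK : IsDomBasis K) {U : Set α} (hU : ScottOpen U)
    {x : α} (hx : x ∈ U) : ∃ k, wayBelow k x ∧ k ∈ U := by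
  obtain ⟨hne, hdir, hlub⟩ := hK x
  obtain ⟨k, ⟨_, hkx⟩, hkU⟩ := hU.2 _ hne hdir x hlub hx
  exact ⟨k, hkx, hkU⟩

end IsDomBasis

section approxApart

variable {α : Type*} [Preorder α]

theorem swap_mem_approxApart {x y : α} (h : (x, y) ∈ approxApart α) : (y, x) ∈ approxApart α := by
  obtain ⟨v, w, hv, hw, hvw⟩ := h
  exact ⟨w, v, hw, hv, fun ⟨b, hwb, hvb⟩ => hvw ⟨b, hvb, hwb⟩⟩

theorem notMem_approxApart_self (x : α) : (x, x) ∉ approxApart α :=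
  fun ⟨_, _, hv, hw, hvw⟩ => hvw ⟨x, hv.le, hw.le⟩

theorem prodScottOpen_approxApart {K : Set α} (hK : IsDomBasis K) :
    ProdScottOpen (approxApart α) := by
  rintro ⟨x, y⟩ ⟨v, w, hv, hw, hvw⟩
  exact ⟨_, _, hK.scottOpen_setOf_wayBelow v, hK.scottOpen_setOf_wayBelow w, hv, hw,
    fun _ ⟨ha, hb⟩ => ⟨v, w, ha, hb, hvw⟩⟩

theorem compl_approxApart_subset {K : Set α} (hK : IsDomBasis K) {T : Set (α × α)}
    (hT : ∀ x, (x, x) ∈ T) (hTc : ProdScottOpen Tᶜ) : (approxApart α)ᶜ ⊆ T := by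
  intro p hp
  by_contra hpT
  obtain ⟨U, V, hU, hV, hpU, hpV, hUV⟩ := hTc p hpT
  obtain ⟨v, hv, hvU⟩ := hK.exists_wayBelow_mem_of_scottOpen hU hpU
  obtain ⟨w, hw, hwV⟩ := hK.exists_wayBelow_mem_of_scottOpen hV hpV
  exact hp ⟨v, w, hv, hw, fun ⟨b, hvb, hwb⟩ =>
    hUV ⟨hU.1 v hvU b hvb, hV.1 w hwV b hwb⟩ (hT b)⟩

end approxApart

theorem stmt14_general {α : Type*} [PartialOrder α]
    (K : Set α) (hK : IsDomBasis K)
    (R : Set (α × α))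
    (hR : R = {p : α × α | ∃ v w : α, wayBelow v p.1 ∧ wayBelow w p.2 ∧
      ¬∃ b : α, v ≤ b ∧ w ≤ b}) :
    ProdScottOpen R ∧
    (∀ x y : α, (x, y) ∈ R → (y, x) ∈ R) ∧
    (∀ x : α, (x, x) ∈ Rᶜ) ∧
    (∀ x y : α, (x, y) ∈ Rᶜ → (y, x) ∈ Rᶜ) ∧
    ProdScottOpen (Rᶜ)ᶜ ∧
    (∀ T : Set (α × α), (∀ x : α, (x, x) ∈ T) → ProdScottOpen Tᶜ → Rᶜ ⊆ T) := by
  change R = approxApart α at hR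
  subst hR
  refine ⟨prodScottOpen_approxApart hK, fun _ _ => swap_mem_approxApart, notMem_approxApart_self,
    fun _ _ h hyx => h (swap_mem_approxApart hyx), ?_, fun _ => compl_approxApart_subset hK⟩
  rw [compl_compl]
  exact prodScottOpen_approxApart hK

/-- in a continuous dcpo, the relation
`R = {(x,y) | ∃ v ≪ x, w ≪ y with {v,w} unbounded}` is open in the product of
Scott topologies and symmetric, and its complement `∼` is the least closed
tolerance: reflexive, symmetric, closed, and contained in every reflexive
relation that is closed in the product topology. -/
theorem stmt14 {α : Type*} [PartialOrder α]
    (hd : IsDcpo α) (K : Set α) (hK : IsDomBasis K)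
    (R : Set (α × α))
    (hR : R = {p : α × α | ∃ v w : α, wayBelow v p.1 ∧ wayBelow w p.2 ∧
      ¬∃ b : α, v ≤ b ∧ w ≤ b}) :
    ProdScottOpen R ∧
    (∀ x y : α, (x, y) ∈ R → (y, x) ∈ R) ∧
    (∀ x : α, (x, x) ∈ Rᶜ) ∧
    (∀ x y : α, (x, y) ∈ Rᶜ → (y, x) ∈ Rᶜ) ∧
    ProdScottOpen (Rᶜ)ᶜ ∧
    (∀ T : Set (α × α), (∀ x : α, (x, x) ∈ T) → ProdScottOpen Tᶜ → Rᶜ ⊆ T) :=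
  stmt14_general K hK R hR
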